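/- (Theorem 2, maximum invariance, attainment.) Suppose that for each 0 ≤ k < N there exists a Borel-measurable map μ_k^* : X → U such that 1_A(x) ∫_X W_{k+1}(y) T(dy|x,μ_k^*(x)) = W_k(x) for all x ∈ X (i.e. the supremum in the DP recursion is attained by a measurable selector). Then the Markov policy π^* = (μ_0^*,…,μ_{N−1}^*) satisfies V_k^{π^*}(x) = W_k(x) for all 0 ≤ k ≤ N and x ∈ X, where V_k^{π^*}(x) = P_{k,x}^{π^*}( x_j ∈ A for all k ≤ j ≤ N ); in particular W_k(x) = max_{π} P_{k,x}^π( x_j ∈ A for all k ≤ j ≤ N ), the maximum being over all Markov policies. -/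

import Mathlib

/-!
Under a fixed Markov policy the probability of staying in `A` on `[k, N]` obeys the backward
recursion `V_k = 1_A · ∫ V_{k+1} dκ_k`, which is read off the trajectory law one transition at a
time. Under the selector `μ*` the functions `W_k` satisfy this very recursion, so `W = V^{π*}`.
Because `W_k` is a supremum over all actions, `V^{π*}` is a supersolution of the recursion of
every other policy `π`, and backward induction gives `V^π ≤ V^{π*}`.
-/

open MeasureTheory ProbabilityTheory Set

noncomputable section

namespace StochasticSafety

variable {X U : Type*} [MeasurableSpace X] [MeasurableSpace U]

/-- A Markov policy: a sequence of (Borel-)measurable maps from states to actions. -/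
structure Policy (X U : Type*) [MeasurableSpace X] [MeasurableSpace U] where
  act : ℕ → X → U
  measurable_act : ∀ k, Measurable (act k)

/-- The closed-loop kernel `κ_k^π(·|x) = T(·|x, μ_k(x))` of a policy at time `k`. -/
def Policy.kernel (T : Kernel (X × U) X) (π : Policy X U) (k : ℕ) : Kernel X X :=
  T.comap (fun x => (x, π.act k x)) (measurable_id.prodMk (π.measurable_act k))

/-- One step of the closed-loop trajectory evolution at time `j`: given the trajectory
built so far, sample `y` from `κ` applied at coordinate `j` and record it at
coordinate `j + 1`. -/
def step (κ : Kernel X X) (j : ℕ) : Kernel (ℕ → X) (ℕ → X) :=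
  Kernel.map (Kernel.id ×ₖ κ.comap (fun ω => ω j) (measurable_pi_apply j))
    (fun p => Function.update p.1 (j + 1) p.2)

/-- Kernel describing `m` steps of the trajectory evolution, starting at time `k`,
under the time-dependent kernels `κ`. -/
def evolve (κ : ℕ → Kernel X X) : ℕ → ℕ → Kernel (ℕ → X) (ℕ → X)
  | _, 0 => Kernel.id
  | k, (m + 1) => (evolve κ (k + 1) m) ∘ₖ step (κ k) k

/-- The law `P_{k,x}^π` of the closed-loop trajectory `(x_k, …, x_N)` started at `x`
at time `k` under policy `π` (finite Ionescu–Tulcea composition of the closed-loop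
kernels): the states `x_k, …, x_N` are recorded in coordinates `k, …, N` of `ℕ → X`,
all other coordinates carry the irrelevant initial value `x`. -/
def trajLaw (T : Kernel (X × U) X) (π : Policy X U) (N k : ℕ) (x : X) :
    Measure (ℕ → X) :=
  evolve (π.kernel T) k (N - k) (fun _ => x)

/-- The event that the trajectory stays in `A` at all times `j` with `k ≤ j ≤ N`. -/
def safeEvent (A : Set X) (k N : ℕ) : Set (ℕ → X) :=
  {ω | ∀ j, k ≤ j → j ≤ N → ω j ∈ A}

/-- The event that the trajectory visits `A` at some time `j` with `k ≤ j ≤ N`. -/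
def reachEvent (A : Set X) (k N : ℕ) : Set (ℕ → X) :=
  {ω | ∃ j, k ≤ j ∧ j ≤ N ∧ ω j ∈ A}

open scoped ENNReal Classical

lemma measurableSet_safeEvent {A : Set X} (hA : MeasurableSet A) (K M : ℕ) :
    MeasurableSet (safeEvent A K M) := by
  have : safeEvent A K M = ⋂ j ∈ Icc K M, (fun ω : ℕ → X => ω j) ⁻¹' A := by
    ext ω; simp [safeEvent]
  rw [this]
  exact MeasurableSet.biInter (to_countable _) fun j _ => measurable_pi_apply j hA

lemma forall_Ico_add_one_iff {P : ℕ → Prop} {K k : ℕ} (hK : K ≤ k) :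
    (∀ j ∈ Ico K (k + 1), P j) ↔ (∀ j ∈ Ico K k, P j) ∧ P k := by
  rw [← Order.succ_eq_add_one, Order.Ico_succ_right_eq_insert hK, forall_mem_insert, and_comm]

lemma step_apply (κ : Kernel X X) [IsSFiniteKernel κ] (j : ℕ) (ω : ℕ → X) :
    step κ j ω = ((Measure.dirac ω).prod (κ (ω j))).map
      (fun p : (ℕ → X) × X => Function.update p.1 (j + 1) p.2) := by
  rw [step, Kernel.map_apply _ measurable_update', Kernel.prod_apply, Kernel.id_apply,
    Kernel.comap_apply]

lemma evolve_succ_apply (κ : ℕ → Kernel X X) [∀ k, IsSFiniteKernel (κ k)] (k m : ℕ)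
    (ω : ℕ → X) {E : Set (ℕ → X)} (hE : MeasurableSet E) :
    evolve κ k (m + 1) ω E
      = ∫⁻ y, evolve κ (k + 1) m (Function.update ω (k + 1) y) E ∂κ k (ω k) := by
  have hg : Measurable fun p : (ℕ → X) × X =>
      evolve κ (k + 1) m (Function.update p.1 (k + 1) p.2) E :=
    (Kernel.measurable_coe _ hE).comp measurable_update'
  rw [evolve, Kernel.comp_apply' _ _ _ hE, step_apply,
    lintegral_map (Kernel.measurable_coe _ hE) measurable_update',
    lintegral_prod _ hg.aemeasurable, lintegral_dirac' _ hg.lintegral_prod_right']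

/-- `safeProb κ A k m x` is the probability that the chain started at `x` at time `k` stays in `A`
at the `m + 1` times `k, …, k + m`. -/
def safeProb (κ : ℕ → Kernel X X) (A : Set X) : ℕ → ℕ → X → ℝ≥0∞
  | _, 0 => A.indicator 1
  | k, m + 1 => A.indicator fun x => ∫⁻ y, safeProb κ A (k + 1) m y ∂κ k x

lemma measurable_safeProb (κ : ℕ → Kernel X X) [∀ k, IsSFiniteKernel (κ k)] {A : Set X}
    (hA : MeasurableSet A) (m k : ℕ) : Measurable (safeProb κ A k m) := by
  induction m generalizing k with
  | zero => exact measurable_const.indicator hA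
  | succ m ih =>
    exact ((ih (k + 1)).comp measurable_snd).lintegral_kernel_prod_right'.indicator hA

lemma lintegral_le_one_of_le_one (μ : Measure X) [IsProbabilityMeasure μ] {f : X → ℝ≥0∞}
    (hf : ∀ x, f x ≤ 1) : ∫⁻ x, f x ∂μ ≤ 1 :=
  (lintegral_mono hf).trans_eq (by simp)

lemma safeProb_le_one (κ : ℕ → Kernel X X) [∀ k, IsMarkovKernel (κ k)] (A : Set X)
    (m k : ℕ) (x : X) : safeProb κ A k m x ≤ 1 := by
  induction m generalizing k x with
  | zero => exact indicator_apply_le' (fun _ => le_rfl) fun _ => zero_le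
  | succ m ih =>
    exact indicator_apply_le' (fun _ => lintegral_le_one_of_le_one _ (ih _)) fun _ => zero_le

lemma safeProb_ne_top (κ : ℕ → Kernel X X) [∀ k, IsMarkovKernel (κ k)] (A : Set X)
    (m k : ℕ) (x : X) : safeProb κ A k m x ≠ ∞ :=
  ne_top_of_le_ne_top ENNReal.one_ne_top (safeProb_le_one κ A m k x)

/-- The coordinates in `[K, k)` are already fixed by `ω`; allowing `K < k` is what lets the
induction on `m` advance the start time. -/
lemma evolve_apply_safeEvent (κ : ℕ → Kernel X X) [∀ k, IsSFiniteKernel (κ k)] {A : Set X}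
    (hA : MeasurableSet A) {K k : ℕ} (hK : K ≤ k) (m : ℕ) (ω : ℕ → X) :
    evolve κ k m ω (safeEvent A K (k + m))
      = if ∀ j ∈ Ico K k, ω j ∈ A then safeProb κ A k m (ω k) else 0 := by
  induction m generalizing k ω with
  | zero =>
    have hmem : ω ∈ safeEvent A K k ↔ (∀ j ∈ Ico K k, ω j ∈ A) ∧ ω k ∈ A := by
      rw [← forall_Ico_add_one_iff hK]
      simp [safeEvent]
    rw [evolve, add_zero, Kernel.id_apply,
      Measure.dirac_apply' _ (measurableSet_safeEvent hA _ _), indicator_apply, hmem]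
    by_cases hpast : ∀ j ∈ Ico K k, ω j ∈ A <;> by_cases hk : ω k ∈ A <;>
      simp [safeProb, hk]
  | succ m ih =>
    have hupdate (y : X) : (∀ j ∈ Ico K (k + 1), Function.update ω (k + 1) y j ∈ A)
        ↔ (∀ j ∈ Ico K k, ω j ∈ A) ∧ ω k ∈ A := by
      rw [← forall_Ico_add_one_iff hK]
      exact forall₂_congr fun j hj => by rw [Function.update_of_ne hj.2.ne]
    rw [evolve_succ_apply _ _ _ _ (measurableSet_safeEvent hA _ _),
      show k + (m + 1) = k + 1 + m by omega]
    simp_rw [ih (Nat.le_succ_of_le hK), hupdate, Function.update_self]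
    by_cases hpast : ∀ j ∈ Ico K k, ω j ∈ A
    · by_cases hk : ω k ∈ A
      · simp only [eq_true hpast, hk, and_self, if_true, safeProb, indicator_of_mem hk,
          Nat.succ_eq_add_one]
      · simp only [hk, and_false, if_false, lintegral_zero, safeProb, indicator_of_notMem hk,
          ite_self]
    · simp only [eq_false hpast, false_and, if_false, lintegral_zero]

instance Policy.isMarkovKernel_kernel (T : Kernel (X × U) X) [IsMarkovKernel T]
    (π : Policy X U) (k : ℕ) : IsMarkovKernel (π.kernel T k) := by
  rw [Policy.kernel]; infer_instance

lemma trajLaw_safeEvent (T : Kernel (X × U) X) [IsMarkovKernel T] (π : Policy X U)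
    {A : Set X} (hA : MeasurableSet A) {N k : ℕ} (hk : k ≤ N) (x : X) :
    trajLaw T π N k x (safeEvent A k N) = safeProb (π.kernel T) A k (N - k) x := by
  have h := evolve_apply_safeEvent (π.kernel T) hA (le_refl k) (N - k) fun _ => x
  rwa [Nat.add_sub_cancel' hk, if_pos (by simp)] at h

lemma eq_toReal_safeProb_of_recursion (κ : ℕ → Kernel X X) [∀ k, IsMarkovKernel (κ k)]
    {A : Set X} (hA : MeasurableSet A) {N : ℕ} {W : ℕ → X → ℝ}
    (hWN : ∀ x, W N x = A.indicator 1 x)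
    (hW : ∀ k < N, ∀ x, A.indicator (fun x' => ∫ y, W (k + 1) y ∂κ k x') x = W k x) :
    ∀ k ≤ N, ∀ x, W k x = (safeProb κ A k (N - k) x).toReal := by
  intro k hk
  induction hk using Nat.decreasingInduction with
  | self => intro x; by_cases hx : x ∈ A <;> simp [safeProb, hWN, hx]
  | of_succ k hk ih =>
    intro x
    rw [← hW k hk x, show N - k = N - (k + 1) + 1 by omega, safeProb]
    by_cases hx : x ∈ A
    · rw [indicator_of_mem hx, indicator_of_mem hx, funext ih, integral_toReal
        (measurable_safeProb κ hA _ _).aemeasurable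
        (ae_of_all _ fun y => (safeProb_ne_top κ A _ _ y).lt_top)]
    · simp [hx]

lemma safeProb_le_of_supersolution (κ : ℕ → Kernel X X) {A : Set X} {N : ℕ}
    {V : ℕ → X → ℝ≥0∞} (hVN : ∀ x ∈ A, 1 ≤ V N x)
    (hV : ∀ k < N, ∀ x ∈ A, ∫⁻ y, V (k + 1) y ∂κ k x ≤ V k x) :
    ∀ k ≤ N, ∀ x, safeProb κ A k (N - k) x ≤ V k x := by
  intro k hk
  induction hk using Nat.decreasingInduction with
  | self => intro x; simpa [safeProb] using indicator_apply_le' (hVN x) fun _ => zero_le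
  | of_succ k hk ih =>
    intro x
    rw [show N - k = N - (k + 1) + 1 by omega, safeProb]
    exact indicator_apply_le' (fun hx => (lintegral_mono ih).trans (hV k hk x hx))
      fun _ => zero_le

lemma lintegral_safeProb_le_of_eq_iSup (T : Kernel (X × U) X) [IsMarkovKernel T]
    (κ : ℕ → Kernel X X) [∀ k, IsMarkovKernel (κ k)] {A : Set X} (hA : MeasurableSet A)
    {N : ℕ} {W : ℕ → X → ℝ}
    (hW : ∀ k < N, ∀ x,
      W k x = ⨆ u : U, A.indicator (fun x' => ∫ y, W (k + 1) y ∂(T (x', u))) x)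
    (hWV : ∀ k ≤ N, ∀ x, W k x = (safeProb κ A k (N - k) x).toReal) :
    ∀ k < N, ∀ x ∈ A, ∀ u, ∫⁻ y, safeProb κ A (k + 1) (N - (k + 1)) y ∂T (x, u)
      ≤ safeProb κ A k (N - k) x := by
  intro k hk x hx u
  set v := safeProb κ A (k + 1) (N - (k + 1))
  have hstep_le_one (u : U) : ∫⁻ y, v y ∂T (x, u) ≤ 1 :=
    lintegral_le_one_of_le_one _ (safeProb_le_one κ A _ _)
  have hWk : W k x = ⨆ u, (∫⁻ y, v y ∂T (x, u)).toReal := by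
    simp only [hW k hk x, indicator_of_mem hx, funext (hWV (k + 1) hk)]
    exact iSup_congr fun u => integral_toReal (measurable_safeProb κ hA _ _).aemeasurable
      (ae_of_all _ fun y => (safeProb_ne_top κ A _ _ y).lt_top)
  rw [← ENNReal.toReal_le_toReal (ne_top_of_le_ne_top ENNReal.one_ne_top (hstep_le_one u))
    (safeProb_ne_top κ A _ _ x), ← hWV k hk.le x, hWk]
  refine le_ciSup (f := fun u => (∫⁻ y, v y ∂T (x, u)).toReal) ⟨1, ?_⟩ u
  rintro _ ⟨u, rfl⟩
  exact ENNReal.toReal_le_of_le_ofReal zero_le_one (ENNReal.ofReal_one ▸ hstep_le_one u)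

variable [StandardBorelSpace X] [TopologicalSpace U]
  [TopologicalSpace.MetrizableSpace U] [CompactSpace U] [Nonempty U] [BorelSpace U]

theorem max_dp_value_attained_general
    (T : Kernel (X × U) X) [IsMarkovKernel T]
    (N : ℕ) (A : Set X) (hA : MeasurableSet A)
    (W : ℕ → X → ℝ)
    (hWN : ∀ x, W N x = A.indicator 1 x)
    (hW : ∀ k < N, ∀ x,
      W k x = ⨆ u : U, A.indicator (fun x' => ∫ y, W (k + 1) y ∂(T (x', u))) x)
    (μstar : ℕ → X → U) (hμstar : ∀ k, Measurable (μstar k))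
    (hopt : ∀ k < N, ∀ x,
      A.indicator (fun x' => ∫ y, W (k + 1) y ∂(T (x', μstar k x'))) x = W k x) :
    (∀ k ≤ N, ∀ x,
        (trajLaw T ⟨μstar, hμstar⟩ N k x (safeEvent A k N)).toReal = W k x) ∧
    (∀ k ≤ N, ∀ x,
        IsGreatest
          (Set.range fun π : Policy X U =>
            (trajLaw T π N k x (safeEvent A k N)).toReal)
          (W k x)) := by
  set πstar : Policy X U := ⟨μstar, hμstar⟩
  have hWV := eq_toReal_safeProb_of_recursion (πstar.kernel T) hA hWN hopt
  have hsuper := lintegral_safeProb_le_of_eq_iSup T (πstar.kernel T) hA hW hWV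
  have hle (π : Policy X U) (k : ℕ) (hk : k ≤ N) (x : X) :
      trajLaw T π N k x (safeEvent A k N) ≤ safeProb (πstar.kernel T) A k (N - k) x :=
    (trajLaw_safeEvent T π hA hk x).trans_le <|
      safeProb_le_of_supersolution (V := fun k => safeProb (πstar.kernel T) A k (N - k)) _
        (fun x hx => by simp [safeProb, hx]) (fun k hk x hx => hsuper k hk x hx (π.act k x))
        k hk x
  have hval : ∀ k ≤ N, ∀ x, (trajLaw T πstar N k x (safeEvent A k N)).toReal = W k x :=
    fun k hk x => by rw [trajLaw_safeEvent T πstar hA hk, hWV k hk]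
  refine ⟨hval, fun k hk x => ⟨⟨πstar, hval k hk x⟩, ?_⟩⟩
  rintro _ ⟨π, rfl⟩
  rw [hWV k hk]
  exact ENNReal.toReal_mono (safeProb_ne_top _ A _ _ x) (hle π k hk x)

/-- Theorem 2, maximum invariance, attainment: if at each time `k < N`
a measurable selector `μ_k^*` attains the supremum in the DP recursion, then the
Markov policy `π^* = (μ_0^*, …, μ_{N-1}^*)` satisfies `V_k^{π^*} = W_k` everywhere;
in particular `W_k(x)` is the maximum over all Markov policies of the probability of
staying in `A` over `[k, N]`. -/
theorem max_dp_value_attained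
    (T : Kernel (X × U) X) [IsMarkovKernel T]
    (N : ℕ) (A : Set X) (hA : MeasurableSet A)
    (W : ℕ → X → ℝ) (hWmeas : ∀ k, Measurable (W k))
    (hWN : ∀ x, W N x = A.indicator 1 x)
    (hW : ∀ k < N, ∀ x,
      W k x = ⨆ u : U, A.indicator (fun x' => ∫ y, W (k + 1) y ∂(T (x', u))) x)
    (μstar : ℕ → X → U) (hμstar : ∀ k, Measurable (μstar k))
    (hopt : ∀ k < N, ∀ x,
      A.indicator (fun x' => ∫ y, W (k + 1) y ∂(T (x', μstar k x'))) x = W k x) :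
    (∀ k ≤ N, ∀ x,
        (trajLaw T ⟨μstar, hμstar⟩ N k x (safeEvent A k N)).toReal = W k x) ∧
    (∀ k ≤ N, ∀ x,
        IsGreatest
          (Set.range fun π : Policy X U =>
            (trajLaw T π N k x (safeEvent A k N)).toReal)
          (W k x)) :=
  max_dp_value_attained_general T N A hA W hWN hW μstar hμstar hopt

end StochasticSafety
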